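/- Let x ∈ ℂⁿ satisfy x − x_* ∈ range(Aᴴ) and b − Ax ≠ 0. Then φ(x, η(x)) ≥ ρ̂(x)·‖x − x_*‖₂², where ρ̂(x) = ((1/2)·‖A‖_F²/‖A_{Û(x),:}‖_F² + 1/2)·(‖A_{U(x),:}‖_F²/‖A‖_F²)·(σ_r(A)²/σ₁(A_{U(x),:})²). -/

import Mathlib

open Matrix Finset

noncomputable section

/-- Squared Euclidean norm `‖v‖₂²` of a complex vector. -/
def vecNormSq {k : ℕ} (v : Fin k → ℂ) : ℝ := ∑ i, ‖v i‖ ^ 2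

variable {m n : ℕ}

/-- Squared Euclidean norm `‖A_{i,:}‖₂²` of the `i`-th row of `A`. -/
def rowNormSq (A : Matrix (Fin m) (Fin n) ℂ) (i : Fin m) : ℝ := ∑ j, ‖A i j‖ ^ 2

/-- Squared Frobenius norm `‖A‖_F²`. -/
def frobSq (A : Matrix (Fin m) (Fin n) ℂ) : ℝ := ∑ i, ∑ j, ‖A i j‖ ^ 2

/-- `ψ_i(x) = |b_i − A_{i,:} x|² / ‖A_{i,:}‖₂²`. -/
def psi (A : Matrix (Fin m) (Fin n) ℂ) (b : Fin m → ℂ) (x : Fin n → ℂ) (i : Fin m) : ℝ :=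
  ‖b i - A.mulVec x i‖ ^ 2 / rowNormSq A i

/-- `max_{i ∈ [m]} ψ_i(x)`. -/
def psiMax (A : Matrix (Fin m) (Fin n) ℂ) (b : Fin m → ℂ) (x : Fin n → ℂ) : ℝ :=
  ⨆ i, psi A b x i

/-- The row submatrix `A_{S,:}` of `A`, realized by replacing the rows outside `S` with zero
(which changes neither the Frobenius norm nor the largest singular value). -/
def rowSub (A : Matrix (Fin m) (Fin n) ℂ) (S : Finset (Fin m)) : Matrix (Fin m) (Fin n) ℂ :=
  fun i j => if i ∈ S then A i j else 0

/-- `σ_r(A)²` : the smallest nonzero eigenvalue of `AᴴA`. -/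
def sigmaRSq (A : Matrix (Fin m) (Fin n) ℂ) : ℝ :=
  sInf {μ : ℝ | μ ≠ 0 ∧ ∃ i, (Matrix.isHermitian_conjTranspose_mul_self A).eigenvalues i = μ}

/-- `σ₁(M)²` : the largest eigenvalue of `MᴴM`, i.e. the largest singular value squared. -/
def sigma1Sq {k : Type*} [Fintype k] (M : Matrix k (Fin n) ℂ) : ℝ :=
  ⨆ i, (Matrix.isHermitian_conjTranspose_mul_self M).eigenvalues i

/-- `Û(x) = {i ∈ [m] : ψ_i(x) ≠ 0}`. -/
def Uhat (A : Matrix (Fin m) (Fin n) ℂ) (b : Fin m → ℂ) (x : Fin n → ℂ) : Finset (Fin m) :=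
  Finset.univ.filter fun i => psi A b x i ≠ 0

/-- The greedy index set `U(x)` with relaxation parameter `θ = 1/2`. -/
def Ugreedy (A : Matrix (Fin m) (Fin n) ℂ) (b : Fin m → ℂ) (x : Fin n → ℂ) : Finset (Fin m) :=
  Finset.univ.filter fun i =>
    (1 / 2) * psiMax A b x + (1 / 2) * (vecNormSq (b - A.mulVec x) / frobSq A) ≤ psi A b x i

/-- `η(x) = Σ_{i ∈ U(x)} (b_i − A_{i,:}x) e_i`. -/
def eta (A : Matrix (Fin m) (Fin n) ℂ) (b : Fin m → ℂ) (x : Fin n → ℂ) : Fin m → ℂ :=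
  fun i => if i ∈ Ugreedy A b x then b i - A.mulVec x i else 0

/-- `uᴴ v`, the conjugate dot product. -/
def dotc {k : ℕ} (u v : Fin k → ℂ) : ℂ := ∑ i, (starRingEnd ℂ) (u i) * v i

/-- `φ(x, η) = |ηᴴ(b − A x)|² / ‖Aᴴ η‖₂²`. -/
def phi (A : Matrix (Fin m) (Fin n) ℂ) (b : Fin m → ℂ) (x : Fin n → ℂ) (η : Fin m → ℂ) : ℝ :=
  ‖dotc η (b - A.mulVec x)‖ ^ 2 / vecNormSq (Aᴴ.mulVec η)

end

/-!
Write `r = b - A x` and `s = ‖η‖²`; then `ηᴴ r = s`, and since `η` is supported on `U`,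
`Aᴴ η = A_{U,:}ᴴ η`, so `‖Aᴴ η‖² ≤ σ₁(A_{U,:})² s` and `φ(x, η) = s² / ‖Aᴴ η‖² ≥ s / σ₁(A_{U,:})²`.
Consistency gives `|r_i|² = ψ_i ‖A_{i,:}‖²` for every row. Summing over `Û` shows
`max ψ ≥ ‖r‖² / ‖A_{Û,:}‖_F²`, and summing the greedy threshold over `U` then gives
`s ≥ (½ ‖A‖_F² / ‖A_{Û,:}‖_F² + ½) (‖A_{U,:}‖_F² / ‖A‖_F²) ‖r‖²`. Finally
`‖r‖² = ‖A (x - x_*)‖² ≥ σ_r(A)² ‖x - x_*‖²` because `x - x_*` lies in `range(Aᴴ)`, which is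
orthogonal to the eigenvectors of `AᴴA` with eigenvalue `0`.
-/

open scoped InnerProductSpace

section Euclidean

variable {k l : ℕ}

lemma vecNormSq_eq_norm_sq (v : Fin k → ℂ) :
    vecNormSq v = ‖(WithLp.toLp 2 v : EuclideanSpace ℂ (Fin k))‖ ^ 2 := by
  simp [vecNormSq, EuclideanSpace.norm_sq_eq]

lemma dotc_eq_inner (u v : Fin k → ℂ) :
    dotc u v = ⟪(WithLp.toLp 2 u : EuclideanSpace ℂ (Fin k)), WithLp.toLp 2 v⟫_ℂ := by
  simp [dotc, EuclideanSpace.inner_toLp_toLp, dotProduct, mul_comm]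

lemma vecNormSq_nonneg (v : Fin k → ℂ) : 0 ≤ vecNormSq v := by
  rw [vecNormSq_eq_norm_sq]; positivity

lemma vecNormSq_neg (v : Fin k → ℂ) : vecNormSq (-v) = vecNormSq v := by
  simp [vecNormSq]

lemma dotc_self (v : Fin k → ℂ) : dotc v v = vecNormSq v := by
  rw [dotc_eq_inner, inner_self_eq_norm_sq_to_K, vecNormSq_eq_norm_sq]
  push_cast; rfl

lemma norm_dotc_sq_le (u v : Fin k → ℂ) : ‖dotc u v‖ ^ 2 ≤ vecNormSq u * vecNormSq v := by
  rw [dotc_eq_inner, vecNormSq_eq_norm_sq, vecNormSq_eq_norm_sq, ← mul_pow]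
  gcongr
  exact norm_inner_le_norm _ _

lemma vecNormSq_eq_sum_norm_inner_sq {ι : Type*} [Fintype ι]
    (B : OrthonormalBasis ι ℂ (EuclideanSpace ℂ (Fin k))) (v : Fin k → ℂ) :
    vecNormSq v = ∑ i, ‖⟪B i, WithLp.toLp 2 v⟫_ℂ‖ ^ 2 := by
  rw [vecNormSq_eq_norm_sq, B.sum_sq_norm_inner_right]

lemma dotc_mulVec (M : Matrix (Fin k) (Fin l) ℂ) (u : Fin k → ℂ) (w : Fin l → ℂ) :
    dotc u (M *ᵥ w) = dotc (Mᴴ *ᵥ u) w := by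
  change star u ⬝ᵥ (M *ᵥ w) = star (Mᴴ *ᵥ u) ⬝ᵥ w
  rw [dotProduct_mulVec, star_mulVec, conjTranspose_conjTranspose]

end Euclidean

section Spectral

variable {k n : ℕ}

lemma Matrix.IsHermitian.re_dotc_mulVec_eq_sum {H : Matrix (Fin n) (Fin n) ℂ} (hH : H.IsHermitian)
    (v : Fin n → ℂ) :
    (dotc v (H *ᵥ v)).re =
      ∑ i, hH.eigenvalues i * ‖⟪hH.eigenvectorBasis i, WithLp.toLp 2 v⟫_ℂ‖ ^ 2 := by
  have hcoeff (i : Fin n) : ⟪hH.eigenvectorBasis i, WithLp.toLp 2 (H *ᵥ v)⟫_ℂ =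
      hH.eigenvalues i * ⟪hH.eigenvectorBasis i, WithLp.toLp 2 v⟫_ℂ := by
    rw [← WithLp.toLp_ofLp (x := hH.eigenvectorBasis i), ← dotc_eq_inner, ← dotc_eq_inner,
      dotc_mulVec, hH.eq, hH.mulVec_eigenvectorBasis]
    simp [dotc, Finset.mul_sum, mul_assoc]
  rw [dotc_eq_inner, ← (hH.eigenvectorBasis).sum_inner_mul_inner, Complex.re_sum]
  refine Finset.sum_congr rfl fun i _ => ?_
  rw [hcoeff, ← inner_conj_symm, mul_left_comm, RCLike.conj_mul]
  exact_mod_cast RCLike.re_ofReal_mul (K := ℂ) _ _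

lemma vecNormSq_mulVec_eq_re_dotc (M : Matrix (Fin k) (Fin n) ℂ) (v : Fin n → ℂ) :
    vecNormSq (M *ᵥ v) = (dotc v ((Mᴴ * M) *ᵥ v)).re := by
  rw [← mulVec_mulVec, dotc_mulVec, conjTranspose_conjTranspose, dotc_self, Complex.ofReal_re]

lemma vecNormSq_mulVec_eq_sum_eigenvalues_mul (M : Matrix (Fin k) (Fin n) ℂ) (v : Fin n → ℂ) :
    vecNormSq (M *ᵥ v) = ∑ i, (isHermitian_conjTranspose_mul_self M).eigenvalues i *
      ‖⟪(isHermitian_conjTranspose_mul_self M).eigenvectorBasis i, WithLp.toLp 2 v⟫_ℂ‖ ^ 2 := by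
  rw [vecNormSq_mulVec_eq_re_dotc, IsHermitian.re_dotc_mulVec_eq_sum]

lemma inner_eigenvectorBasis_conjTranspose_mulVec_eq_zero (M : Matrix (Fin k) (Fin n) ℂ)
    {i : Fin n} (hi : (isHermitian_conjTranspose_mul_self M).eigenvalues i = 0) (y : Fin k → ℂ) :
    ⟪(isHermitian_conjTranspose_mul_self M).eigenvectorBasis i, WithLp.toLp 2 (Mᴴ *ᵥ y)⟫_ℂ = 0 := by
  set u := (isHermitian_conjTranspose_mul_self M).eigenvectorBasis i
  have hMu : vecNormSq (M *ᵥ u) = 0 := by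
    rw [vecNormSq_mulVec_eq_re_dotc, ← hi, Matrix.IsHermitian.eigenvalues_eq]
    rfl
  have h := norm_dotc_sq_le (M *ᵥ u) y
  rw [hMu, zero_mul] at h
  rw [← WithLp.toLp_ofLp (x := u), ← dotc_eq_inner, dotc_mulVec, conjTranspose_conjTranspose]
  exact norm_eq_zero.mp (pow_eq_zero_iff two_ne_zero |>.mp (le_antisymm h (by positivity)))

lemma vecNormSq_mulVec_le_sigma1Sq_mul (M : Matrix (Fin k) (Fin n) ℂ) (v : Fin n → ℂ) :
    vecNormSq (M *ᵥ v) ≤ sigma1Sq M * vecNormSq v := by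
  rw [vecNormSq_mulVec_eq_sum_eigenvalues_mul, vecNormSq_eq_sum_norm_inner_sq
    (isHermitian_conjTranspose_mul_self M).eigenvectorBasis v, Finset.mul_sum]
  gcongr with i
  exact le_ciSup (Set.finite_range _).bddAbove i

lemma sigmaRSq_mul_le_vecNormSq_mulVec (M : Matrix (Fin k) (Fin n) ℂ) {v : Fin n → ℂ}
    (hv : ∃ y, v = Mᴴ *ᵥ y) : sigmaRSq M * vecNormSq v ≤ vecNormSq (M *ᵥ v) := by
  obtain ⟨y, rfl⟩ := hv
  rw [vecNormSq_mulVec_eq_sum_eigenvalues_mul M, vecNormSq_eq_sum_norm_inner_sq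
    (isHermitian_conjTranspose_mul_self M).eigenvectorBasis (Mᴴ *ᵥ y), Finset.mul_sum]
  refine Finset.sum_le_sum fun i _ => ?_
  by_cases hi : (isHermitian_conjTranspose_mul_self M).eigenvalues i = 0
  · simp [inner_eigenvectorBasis_conjTranspose_mulVec_eq_zero M hi]
  · gcongr
    refine csInf_le ((Set.finite_range
      (isHermitian_conjTranspose_mul_self M).eigenvalues).subset ?_).bddBelow ⟨hi, i, rfl⟩
    rintro μ ⟨-, j, rfl⟩
    exact ⟨j, rfl⟩

lemma sigma1Sq_nonneg (M : Matrix (Fin k) (Fin n) ℂ) : 0 ≤ sigma1Sq M :=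
  Real.iSup_nonneg (eigenvalues_conjTranspose_mul_self_nonneg M)

lemma vecNormSq_conjTranspose_mulVec_le_sigma1Sq_mul (M : Matrix (Fin k) (Fin n) ℂ)
    (u : Fin k → ℂ) : vecNormSq (Mᴴ *ᵥ u) ≤ sigma1Sq M * vecNormSq u := by
  set D := vecNormSq (Mᴴ *ᵥ u)
  have hD : D * D ≤ sigma1Sq M * D * vecNormSq u := by
    calc D * D = ‖dotc (M *ᵥ (Mᴴ *ᵥ u)) u‖ ^ 2 := by
          rw [← conjTranspose_conjTranspose M, ← dotc_mulVec, conjTranspose_conjTranspose,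
            dotc_self, Complex.norm_real, Real.norm_eq_abs, sq_abs, sq]
      _ ≤ vecNormSq (M *ᵥ (Mᴴ *ᵥ u)) * vecNormSq u := norm_dotc_sq_le _ _
      _ ≤ sigma1Sq M * D * vecNormSq u := by
          gcongr
          · exact vecNormSq_nonneg u
          · exact vecNormSq_mulVec_le_sigma1Sq_mul M _
  rcases (vecNormSq_nonneg _ : 0 ≤ D).eq_or_lt with hD0 | hDpos
  · rw [show D = 0 from hD0.symm]
    exact mul_nonneg (sigma1Sq_nonneg M) (vecNormSq_nonneg u)
  · rw [mul_right_comm] at hD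
    exact le_of_mul_le_mul_right hD hDpos

end Spectral

section GreedyKaczmarz

variable {m n : ℕ} (A : Matrix (Fin m) (Fin n) ℂ) (b : Fin m → ℂ) (x : Fin n → ℂ)

lemma rowNormSq_nonneg (i : Fin m) : 0 ≤ rowNormSq A i := by
  unfold rowNormSq; positivity

lemma frobSq_rowSub (S : Finset (Fin m)) : frobSq (rowSub A S) = ∑ i ∈ S, rowNormSq A i := by
  simp [frobSq, rowSub, rowNormSq, apply_ite (fun z : ℂ => ‖z‖ ^ 2), Finset.sum_ite_mem]

lemma frobSq_nonneg : 0 ≤ frobSq A := by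
  unfold frobSq; positivity

lemma psi_le_psiMax (i : Fin m) : psi A b x i ≤ psiMax A b x :=
  le_ciSup (Set.finite_range _).bddAbove i

lemma psiMax_nonneg : 0 ≤ psiMax A b x :=
  Real.iSup_nonneg fun i => div_nonneg (by positivity) (rowNormSq_nonneg A i)

variable {A b} {xs : Fin n → ℂ}

-- On a zero row `ψ_i = 0` (division by zero), but there `r_i = 0` since `b = A x_*`.
lemma norm_residual_sq_eq_psi_mul (hxs : A *ᵥ xs = b) (i : Fin m) :
    ‖(b - A *ᵥ x) i‖ ^ 2 = psi A b x i * rowNormSq A i := by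
  by_cases hrow : rowNormSq A i = 0
  · have hA : ∀ j, A i j = 0 := fun j => by
      simpa using (Finset.sum_eq_zero_iff_of_nonneg (fun j _ => by positivity)).mp hrow j
    simp [hrow, ← hxs, mulVec, dotProduct, hA]
  · rw [psi, div_mul_cancel₀ _ hrow, Pi.sub_apply]

lemma vecNormSq_residual_le_psiMax_mul (hxs : A *ᵥ xs = b) :
    vecNormSq (b - A *ᵥ x) ≤ psiMax A b x * frobSq (rowSub A (Uhat A b x)) := by
  calc vecNormSq (b - A *ᵥ x) = ∑ i, psi A b x i * rowNormSq A i := by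
        simp only [vecNormSq, norm_residual_sq_eq_psi_mul x hxs]
    _ = ∑ i ∈ Uhat A b x, psi A b x i * rowNormSq A i :=
        (Finset.sum_filter_of_ne fun _ _ h => left_ne_zero_of_mul h).symm
    _ ≤ ∑ i ∈ Uhat A b x, psiMax A b x * rowNormSq A i := by
        gcongr with i
        · exact rowNormSq_nonneg A i
        · exact psi_le_psiMax A b x i
    _ = psiMax A b x * frobSq (rowSub A (Uhat A b x)) := by
        rw [frobSq_rowSub, Finset.mul_sum]

lemma dotc_eta_residual : dotc (eta A b x) (b - A *ᵥ x) = vecNormSq (eta A b x) := by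
  rw [← dotc_self]
  refine Finset.sum_congr rfl fun i _ => ?_
  by_cases hi : i ∈ Ugreedy A b x <;> simp [eta, hi]

lemma vecNormSq_eta : vecNormSq (eta A b x) = ∑ i ∈ Ugreedy A b x, ‖(b - A *ᵥ x) i‖ ^ 2 := by
  simp [vecNormSq, eta, apply_ite (fun z : ℂ => ‖z‖ ^ 2), Finset.sum_ite_mem]

lemma threshold_mul_frobSq_le_vecNormSq_eta (hxs : A *ᵥ xs = b) :
    ((1 / 2) * psiMax A b x + (1 / 2) * (vecNormSq (b - A *ᵥ x) / frobSq A)) *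
      frobSq (rowSub A (Ugreedy A b x)) ≤ vecNormSq (eta A b x) := by
  rw [vecNormSq_eta, frobSq_rowSub, Finset.mul_sum]
  refine Finset.sum_le_sum fun i hi => ?_
  rw [norm_residual_sq_eq_psi_mul x hxs]
  exact mul_le_mul_of_nonneg_right (Finset.mem_filter.mp hi).2 (rowNormSq_nonneg A i)

lemma greedy_coeff_mul_vecNormSq_residual_le (hxs : A *ᵥ xs = b) :
    ((1 / 2) * (frobSq A / frobSq (rowSub A (Uhat A b x))) + 1 / 2) *
        (frobSq (rowSub A (Ugreedy A b x)) / frobSq A) * vecNormSq (b - A *ᵥ x) ≤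
      vecNormSq (eta A b x) := by
  set R := vecNormSq (b - A *ᵥ x)
  have hψ : R / frobSq (rowSub A (Uhat A b x)) ≤ psiMax A b x :=
    div_le_of_le_mul₀ (frobSq_nonneg _) (psiMax_nonneg A b x)
      (vecNormSq_residual_le_psiMax_mul x hxs)
  rcases eq_or_ne (frobSq A) 0 with hF | hF
  · simpa [hF] using vecNormSq_nonneg (eta A b x)
  calc _ = ((1 / 2) * (R / frobSq (rowSub A (Uhat A b x))) + (1 / 2) * (R / frobSq A)) *
        frobSq (rowSub A (Ugreedy A b x)) := by
        field_simp
    _ ≤ ((1 / 2) * psiMax A b x + (1 / 2) * (R / frobSq A)) *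
        frobSq (rowSub A (Ugreedy A b x)) := by
        gcongr
        exact frobSq_nonneg _
    _ ≤ vecNormSq (eta A b x) := threshold_mul_frobSq_le_vecNormSq_eta x hxs

lemma conjTranspose_rowSub_mulVec_of_support (S : Finset (Fin m)) {v : Fin m → ℂ}
    (hv : ∀ i ∉ S, v i = 0) : (rowSub A S)ᴴ *ᵥ v = Aᴴ *ᵥ v := by
  funext j
  simp only [mulVec, dotProduct]
  refine Finset.sum_congr rfl fun i _ => ?_
  by_cases hi : i ∈ S <;> simp [rowSub, hi, hv]

lemma vecNormSq_eta_div_sigma1Sq_le_phi (hxs : A *ᵥ xs = b) :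
    vecNormSq (eta A b x) / sigma1Sq (rowSub A (Ugreedy A b x)) ≤ phi A b x (eta A b x) := by
  have hσ : vecNormSq (Aᴴ *ᵥ eta A b x) ≤
      sigma1Sq (rowSub A (Ugreedy A b x)) * vecNormSq (eta A b x) := by
    rw [← conjTranspose_rowSub_mulVec_of_support (Ugreedy A b x) fun i hi => by simp [eta, hi]]
    exact vecNormSq_conjTranspose_mulVec_le_sigma1Sq_mul _ _
  -- `‖η‖² = ηᴴ A (x_* - x) = (Aᴴ η)ᴴ (x_* - x)`, so `Aᴴ η ≠ 0` unless `η = 0`.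
  have hCS : vecNormSq (eta A b x) ^ 2 ≤ vecNormSq (Aᴴ *ᵥ eta A b x) * vecNormSq (xs - x) := by
    have h := norm_dotc_sq_le (Aᴴ *ᵥ eta A b x) (xs - x)
    rwa [← dotc_mulVec, mulVec_sub, hxs, dotc_eta_residual, Complex.norm_real, Real.norm_eq_abs,
      sq_abs] at h
  have hs := vecNormSq_nonneg (eta A b x)
  have hD := vecNormSq_nonneg (Aᴴ *ᵥ eta A b x)
  rw [phi, dotc_eta_residual, Complex.norm_real, Real.norm_eq_abs, sq_abs]
  generalize vecNormSq (eta A b x) = s at *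
  generalize vecNormSq (Aᴴ *ᵥ eta A b x) = D at *
  rcases hs.eq_or_lt with rfl | hspos
  · simp
  have hDpos : 0 < D := hD.lt_of_ne fun hD0 => by
    rw [← hD0, zero_mul] at hCS
    nlinarith
  calc s / sigma1Sq (rowSub A (Ugreedy A b x))
      = s ^ 2 / (sigma1Sq (rowSub A (Ugreedy A b x)) * s) := by
        rw [sq, mul_div_mul_right _ _ hspos.ne']
    _ ≤ s ^ 2 / D := div_le_div_of_nonneg_left (sq_nonneg s) hDpos hσ

end GreedyKaczmarz

theorem stmt18_general {m n : ℕ} (A : Matrix (Fin m) (Fin n) ℂ) (b : Fin m → ℂ)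
    (xs : Fin n → ℂ) (hxs1 : A.mulVec xs = b)
    (x : Fin n → ℂ) (hx : ∃ y, x - xs = Aᴴ.mulVec y) :
    (((1 / 2) * (frobSq A / frobSq (rowSub A (Uhat A b x))) + 1 / 2) *
        (frobSq (rowSub A (Ugreedy A b x)) / frobSq A) *
        (sigmaRSq A / sigma1Sq (rowSub A (Ugreedy A b x)))) * vecNormSq (x - xs) ≤
      phi A b x (eta A b x) := by
  have hσr : sigmaRSq A * vecNormSq (x - xs) ≤ vecNormSq (b - A *ᵥ x) := by
    have h := sigmaRSq_mul_le_vecNormSq_mulVec A hx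
    rwa [mulVec_sub, hxs1, ← neg_sub b, vecNormSq_neg] at h
  set c := ((1 / 2) * (frobSq A / frobSq (rowSub A (Uhat A b x))) + 1 / 2) *
    (frobSq (rowSub A (Ugreedy A b x)) / frobSq A)
  have hc : 0 ≤ c := by
    have := frobSq_nonneg A
    have := frobSq_nonneg (rowSub A (Uhat A b x))
    have := frobSq_nonneg (rowSub A (Ugreedy A b x))
    positivity
  have hσ1 := sigma1Sq_nonneg (rowSub A (Ugreedy A b x))
  calc c * (sigmaRSq A / sigma1Sq (rowSub A (Ugreedy A b x))) * vecNormSq (x - xs)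
      = c * (sigmaRSq A * vecNormSq (x - xs)) / sigma1Sq (rowSub A (Ugreedy A b x)) := by ring
    _ ≤ c * vecNormSq (b - A *ᵥ x) / sigma1Sq (rowSub A (Ugreedy A b x)) := by gcongr
    _ ≤ vecNormSq (eta A b x) / sigma1Sq (rowSub A (Ugreedy A b x)) := by
        gcongr
        exact greedy_coeff_mul_vecNormSq_residual_le x hxs1
    _ ≤ phi A b x (eta A b x) := vecNormSq_eta_div_sigma1Sq_le_phi x hxs1

/-- if `x − x_* ∈ range(Aᴴ)` and `b − Ax ≠ 0`, then
`φ(x, η(x)) ≥ ρ̂(x)·‖x − x_*‖₂²`, where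
`ρ̂(x) = ((1/2)‖A‖_F²/‖A_{Û(x),:}‖_F² + 1/2)·(‖A_{U(x),:}‖_F²/‖A‖_F²)·(σ_r(A)²/σ₁(A_{U(x),:})²)`. -/
theorem stmt18 {m n : ℕ} (A : Matrix (Fin m) (Fin n) ℂ) (b : Fin m → ℂ)
    (hA : ∀ i, A i ≠ 0)
    (xs : Fin n → ℂ) (hxs1 : A.mulVec xs = b) (hxs2 : ∃ y, xs = Aᴴ.mulVec y)
    (x : Fin n → ℂ) (hx : ∃ y, x - xs = Aᴴ.mulVec y)
    (hres : b - A.mulVec x ≠ 0) :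
    (((1 / 2) * (frobSq A / frobSq (rowSub A (Uhat A b x))) + 1 / 2) *
        (frobSq (rowSub A (Ugreedy A b x)) / frobSq A) *
        (sigmaRSq A / sigma1Sq (rowSub A (Ugreedy A b x)))) * vecNormSq (x - xs) ≤
      phi A b x (eta A b x) :=
  stmt18_general A b xs hxs1 x hx
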